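/- arXiv:1702.00810 — 13 statements merged into one kernel-verified Lean document; each statement's English description precedes it below -/
import Mathlib

section
/- Let S be a commutative semiring and M an S-semimodule. If f is a polynomial in S[X] that is a zero-divisor on the polynomial semimodule M[X] (i.e., there exists a nonzero g in M[X] with f·g = 0), then there exists a nonzero constant b ∈ M such that f·b = 0 (every coefficient of f annihilates b). -/
/-- The convolution action of a polynomial `f ∈ S[X]` on a "polynomial"
`g ∈ M[X]` (represented as a finitely supported function `ℕ →₀ M`). -/
noncomputable def polyAct {S M : Type*} [CommSemiring S] [AddCommMonoid M] [Module S M]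
    (f : Polynomial S) (g : ℕ →₀ M) : ℕ →₀ M :=
  f.sum fun n s => g.sum fun k m => Finsupp.single (n + k) (s • m)

open Finset

lemma polyAct_apply {S M : Type*} [CommSemiring S] [AddCommMonoid M] [Module S M]
    (f : Polynomial S) (g : ℕ →₀ M) (t : ℕ) :
    polyAct f g t = ∑ n ∈ f.support, ∑ k ∈ g.support,
      if n + k = t then f.coeff n • g k else 0 := by
  classical
  rw [polyAct, Polynomial.sum_def, Finset.sum_apply']
  refine Finset.sum_congr rfl fun n _ => ?_
  rw [Finsupp.sum, Finset.sum_apply']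
  refine Finset.sum_congr rfl fun k _ => ?_
  rw [Finsupp.single_apply]

lemma polyAct_apply' {S M : Type*} [CommSemiring S] [AddCommMonoid M] [Module S M]
    (f : Polynomial S) (g : ℕ →₀ M) (t : ℕ) (B : Finset ℕ) (hB : g.support ⊆ B) :
    polyAct f g t = ∑ n ∈ f.support, ∑ k ∈ B,
      if n + k = t then f.coeff n • g k else 0 := by
  classical
  rw [polyAct_apply]
  refine Finset.sum_congr rfl fun n _ => ?_
  refine Finset.sum_subset hB fun k _ hk => ?_
  rw [Finsupp.notMem_support_iff.mp hk]
  simp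

lemma polyAct_smul {S M : Type*} [CommSemiring S] [AddCommMonoid M] [Module S M]
    (f : Polynomial S) (g : ℕ →₀ M) (a : S) :
    polyAct f (a • g) = a • polyAct f g := by
  classical
  ext t
  rw [Finsupp.smul_apply, polyAct_apply' f (a • g) t g.support Finsupp.support_smul,
    polyAct_apply, Finset.smul_sum]
  refine Finset.sum_congr rfl fun n _ => ?_
  rw [Finset.smul_sum]
  refine Finset.sum_congr rfl fun k _ => ?_
  rw [smul_ite, smul_zero, Finsupp.smul_apply, smul_comm]

lemma mccoy_aux {S M : Type*} [CommSemiring S] [AddCommMonoid M] [Module S M]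
    (f : Polynomial S) : ∀ m : ℕ, ∀ g : ℕ →₀ M, g ≠ 0 → polyAct f g = 0 →
    (∀ k ∈ g.support, k ≤ m) → ∃ b : M, b ≠ 0 ∧ ∀ n : ℕ, f.coeff n • b = 0 := by
  classical
  intro m
  induction m using Nat.strong_induction_on with
  | _ m IH =>
  intro g hg hfg hbd
  by_cases hall : ∀ i : ℕ, f.coeff i • g = 0
  · obtain ⟨d, hd⟩ : ∃ d, g d ≠ 0 := by
      by_contra h
      push_neg at h
      exact hg (Finsupp.ext h)
    refine ⟨g d, hd, fun n => ?_⟩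
    have := congrFun (congrArg DFunLike.coe (hall n)) d
    simpa using this
  · push_neg at hall
    obtain ⟨i0, hi0⟩ := hall
    have hne : g.support.Nonempty := Finsupp.support_nonempty_iff.mpr hg
    set d := g.support.max' hne with hd
    have hdmem : d ∈ g.support := Finset.max'_mem _ hne
    have hdm : d ≤ m := hbd d hdmem
    set T := f.support.filter (fun i => f.coeff i • g ≠ 0) with hT
    have hTne : T.Nonempty := by
      refine ⟨i0, Finset.mem_filter.mpr ⟨?_, hi0⟩⟩
      rw [Polynomial.mem_support_iff]
      intro h
      exact hi0 (by rw [h, zero_smul])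
    set i := T.max' hTne with hi
    have himem : i ∈ T := Finset.max'_mem _ hTne
    -- key claim: f.coeff i • g d = 0
    have hzero : (polyAct f g) (i + d) = 0 := by rw [hfg]; rfl
    have hsum : polyAct f g (i + d) = f.coeff i • g d := by
      rw [polyAct_apply]
      rw [Finset.sum_eq_single i]
      · rw [Finset.sum_eq_single d]
        · simp
        · intro k _ hk
          rw [if_neg (by omega)]
        · intro h; exact absurd hdmem h
      · intro n hn hni
        refine Finset.sum_eq_zero fun k hk => ?_
        split_ifs with h
        · rcases lt_or_gt_of_ne hni with hlt | hgt
          · -- n > i impossible ordering; here n < i ⇒ k > d ⇒ k ∉ support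
            have : k ≤ d := Finset.le_max' _ k hk
            omega
          · -- n > i ⇒ f.coeff n • g = 0
            have hnT : n ∉ T := fun hc => absurd (Finset.le_max' T n hc) (by omega)
            have : f.coeff n • g = 0 := by
              by_contra hc
              exact hnT (Finset.mem_filter.mpr ⟨hn, hc⟩)
            have := congrFun (congrArg DFunLike.coe this) k
            simpa using this
        · rfl
      · intro h
        exact absurd (Finset.mem_filter.mp himem).1 h
    have hkey : f.coeff i • g d = 0 := by rw [← hsum, hzero]
    -- new witness
    set g' : ℕ →₀ M := f.coeff i • g with hg'
    have hg'ne : g' ≠ 0 := (Finset.mem_filter.mp himem).2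
    have hfg' : polyAct f g' = 0 := by
      rw [hg', polyAct_smul, hfg, smul_zero]
    have hg'bd : ∀ k ∈ g'.support, k < d := by
      intro k hk
      have hks : k ∈ g.support := Finsupp.support_smul hk
      have hkd : k ≤ d := Finset.le_max' _ k hks
      rcases lt_or_eq_of_le hkd with h | h
      · exact h
      · exfalso
        have : g' k ≠ 0 := Finsupp.mem_support_iff.mp hk
        rw [hg', Finsupp.smul_apply, h, hkey] at this
        exact this rfl
    have hd1 : 1 ≤ d := by
      by_contra h
      have : g'.support = ∅ := by
        refine Finset.eq_empty_of_forall_notMem fun k hk => ?_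
        have := hg'bd k hk
        omega
      exact hg'ne (Finsupp.support_eq_empty.mp this)
    exact IH (d - 1) (by omega) g' hg'ne hfg' (fun k hk => by have := hg'bd k hk; omega)

/-- McCoy's theorem for polynomial semimodules: if `f ∈ S[X]` is a zero-divisor on
`M[X]`, then `f` is annihilated by a nonzero constant `b ∈ M`. -/
theorem mccoy_poly_semimodule {S M : Type*} [CommSemiring S] [AddCommMonoid M] [Module S M]
    (f : Polynomial S) (hf : ∃ g : ℕ →₀ M, g ≠ 0 ∧ polyAct f g = 0) :
    ∃ b : M, b ≠ 0 ∧ ∀ n : ℕ, f.coeff n • b = 0 := by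
  obtain ⟨g, hg, hfg⟩ := hf
  have hne : g.support.Nonempty := Finsupp.support_nonempty_iff.mpr hg
  exact mccoy_aux f (g.support.max' hne) g hg hfg (fun k hk => Finset.le_max' _ k hk)
end

section
/- Let S be a commutative semiring and p an ideal of S. Then the ideal p[X] of the polynomial semiring S[X] (polynomials all of whose coefficients lie in p) is a prime ideal of S[X] if and only if p is a subtractive prime ideal of S. -/
/-!
If `f, g ∉ p[X]`, let `m` and `k` be the least indices with `f_m, g_k ∉ p`. Every other term
of the coefficient `(f g)_{m+k} = ∑_{i+j=m+k} f_i g_j` lies in `p`, so subtractivity isolates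
`f_m g_k ∈ p`, contradicting primality of `p`. Conversely, primality of `p` is pulled back along
`C`, and if `a, a + b ∈ p` then `(1 + X)(a + bX + aX²) = a + (a+b)X + (a+b)X² + aX³ ∈ p[X]`
while `1 + X ∉ p[X]`, so the coefficient `b` of the second factor lies in `p`.
-/

/-- For an ideal `p` of a commutative semiring `S`, the ideal `p[X]` of the
polynomial semiring `S[X]` consisting of the polynomials all of whose
coefficients lie in `p`. -/
def coeffIdeal {S : Type*} [CommSemiring S] (p : Ideal S) : Ideal (Polynomial S) where
  carrier := {f | ∀ n, f.coeff n ∈ p}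
  zero_mem' := fun n => by simp
  add_mem' := fun hf hg n => by
    rw [Polynomial.coeff_add]; exact p.add_mem (hf n) (hg n)
  smul_mem' := fun g f hf n => by
    rw [smul_eq_mul, Polynomial.coeff_mul]
    exact Ideal.sum_mem p fun c _ => p.mul_mem_left _ (hf c.2)

open Polynomial

def Ideal.IsSubtractive {S : Type*} [CommSemiring S] (p : Ideal S) : Prop :=
  ∀ a b : S, a + b ∈ p → a ∈ p → b ∈ p

section

variable {S : Type*} [CommSemiring S]

@[simp]
theorem mem_coeffIdeal {p : Ideal S} {f : S[X]} : f ∈ coeffIdeal p ↔ ∀ n, f.coeff n ∈ p :=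
  Iff.rfl

theorem coeffIdeal_eq_map_C (p : Ideal S) : coeffIdeal p = p.map C := by
  ext f
  exact Ideal.mem_map_C_iff.symm

theorem comap_C_coeffIdeal (p : Ideal S) : (coeffIdeal p).comap C = p := by
  ext a
  simp only [Ideal.mem_comap, mem_coeffIdeal, coeff_C]
  refine ⟨fun h => by simpa using h 0, fun ha n => ?_⟩
  split_ifs
  exacts [ha, p.zero_mem]

theorem isPrime_of_isPrime_coeffIdeal {p : Ideal S} (h : (coeffIdeal p).IsPrime) :
    p.IsPrime :=
  comap_C_coeffIdeal p ▸ h.comap C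

theorem isSubtractive_of_isPrime_coeffIdeal {p : Ideal S} (h : (coeffIdeal p).IsPrime) :
    p.IsSubtractive := by
  intro a b hab ha
  have hprod : (1 + X) * (C a + C b * X + C a * X ^ 2) ∈ coeffIdeal p := by
    have hexpand : (1 + X) * (C a + C b * X + C a * X ^ 2) =
        C a + C (a + b) * X + C (a + b) * X ^ 2 + C a * X ^ 3 := by
      simp only [C_add]
      ring
    have hCa : C a ∈ p.map C := Ideal.mem_map_of_mem C ha
    have hCab : C (a + b) ∈ p.map C := Ideal.mem_map_of_mem C hab
    rw [hexpand, coeffIdeal_eq_map_C]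
    exact add_mem (add_mem (add_mem hCa (Ideal.mul_mem_right _ _ hCab))
      (Ideal.mul_mem_right _ _ hCab)) (Ideal.mul_mem_right _ _ hCa)
  have hunit : (1 + X : S[X]) ∉ coeffIdeal p := fun h1 =>
    (isPrime_of_isPrime_coeffIdeal h).ne_top <| (Ideal.eq_top_iff_one p).2 (by simpa using h1 0)
  simpa using (h.mem_or_mem hprod).resolve_left hunit 1

theorem exists_mem_coeff_mul_eq_add {p : Ideal S} {f g : S[X]} {m k : ℕ}
    (hf : ∀ i < m, f.coeff i ∈ p) (hg : ∀ j < k, g.coeff j ∈ p) :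
    ∃ r ∈ p, (f * g).coeff (m + k) = f.coeff m * g.coeff k + r := by
  have hmk : (m, k) ∈ Finset.HasAntidiagonal.antidiagonal (m + k) := by simp
  refine ⟨_, ?_, by rw [coeff_mul, ← Finset.add_sum_erase _ _ hmk]⟩
  refine Ideal.sum_mem _ fun x hx => ?_
  obtain ⟨hne, hx⟩ := Finset.mem_erase.1 hx
  rw [Finset.HasAntidiagonal.mem_antidiagonal] at hx
  rcases lt_or_ge x.1 m with h1 | h1
  · exact p.mul_mem_right _ (hf _ h1)
  · have h2 : x.2 < k := by
      by_contra! h2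
      exact hne (Prod.ext (by omega) (by omega))
    exact p.mul_mem_left _ (hg _ h2)

theorem isPrime_coeffIdeal {p : Ideal S} (hp : p.IsPrime) (hs : p.IsSubtractive) :
    (coeffIdeal p).IsPrime where
  ne_top' htop := hp.ne_top (by rw [← comap_C_coeffIdeal p, htop, Ideal.comap_top])
  mem_or_mem' {f g} hfg := by
    classical
    by_contra! hc
    obtain ⟨hf, hg⟩ := hc
    simp only [mem_coeffIdeal, not_forall] at hf hg
    obtain ⟨r, hr, hcoeff⟩ := exists_mem_coeff_mul_eq_add (p := p)
      (fun i hi => not_not.1 (Nat.find_min hf hi)) (fun j hj => not_not.1 (Nat.find_min hg hj))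
    have hlow : f.coeff (Nat.find hf) * g.coeff (Nat.find hg) ∈ p :=
      hs r _ (by rw [add_comm, ← hcoeff]; exact hfg _) hr
    exact (hp.mem_or_mem hlow).elim (Nat.find_spec hf) (Nat.find_spec hg)

end

/-- `p[X]` is a prime ideal of `S[X]` if and only if `p` is a subtractive prime
ideal of `S`. -/
theorem coeffIdeal_isPrime_iff {S : Type*} [CommSemiring S] (p : Ideal S) :
    (coeffIdeal p).IsPrime ↔
      (p.IsPrime ∧ ∀ a b : S, a + b ∈ p → a ∈ p → b ∈ p) :=
  ⟨fun h => ⟨isPrime_of_isPrime_coeffIdeal h, isSubtractive_of_isPrime_coeffIdeal h⟩,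
    fun ⟨hp, hs⟩ => isPrime_coeffIdeal hp hs⟩
end

section
/- Let S be a commutative semiring and G a cancellative torsion-free commutative monoid. Then S is entire (has no nonzero zero-divisors) if and only if the monoid semiring S[G] is entire. -/
/-!
Over a semiring without zero divisors, `S[G]` has no zero divisors as soon as `G` has unique
sums: in a product `f * g` the coefficient at a uniquely attained sum `a + b` of support
elements is the product of the coefficients of `f` at `a` and of `g` at `b`. A cancellative
torsion-free commutative monoid has unique sums because it embeds into a `ℚ`-vector space, the
divisible hull of its Grothendieck group, and a `ℚ`-vector space is, through a basis, a group of
finitely supported functions into the ordered group `ℚ`. The converse holds because `S` sits in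
`S[G]` as the constants `single 0 s`.
-/

theorem noZeroDivisors_iff_forall_mul_eq_zero {M₀ : Type*} [MulZeroClass M₀] :
    NoZeroDivisors M₀ ↔ ∀ a b : M₀, a * b = 0 → a = 0 ∨ b = 0 :=
  ⟨fun _ _ _ => mul_eq_zero.mp, fun h => ⟨h _ _⟩⟩

theorem TwoUniqueSums.of_isAddTorsionFree (G : Type*) [AddCommMonoid G] [IsCancelAdd G]
    [IsAddTorsionFree G] : TwoUniqueSums G :=
  .of_injective_addHom
    ((DivisibleHull.coeAddMonoidHom _).comp Algebra.GrothendieckAddGroup.of).toAddHom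
    (DivisibleHull.coe_injective.comp Algebra.GrothendieckAddGroup.of_injective) inferInstance

theorem NoZeroDivisors.of_addMonoidAlgebra {S G : Type*} [Semiring S] [AddZeroClass G]
    [NoZeroDivisors (AddMonoidAlgebra S G)] : NoZeroDivisors S :=
  Function.Injective.noZeroDivisors (AddMonoidAlgebra.singleZeroRingHom (M := G))
    AddMonoidAlgebra.single_right_injective (map_zero _) (map_mul _)

namespace AddMonoidAlgebra

theorem noZeroDivisors_iff {S G : Type*} [Semiring S] [AddCommMonoid G] [IsCancelAdd G]
    [IsAddTorsionFree G] : NoZeroDivisors (AddMonoidAlgebra S G) ↔ NoZeroDivisors S :=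
  ⟨fun _ => NoZeroDivisors.of_addMonoidAlgebra (G := G),
    fun _ => have := TwoUniqueSums.of_isAddTorsionFree G; inferInstance⟩

end AddMonoidAlgebra

/-- If `G` is a cancellative torsion-free commutative monoid, then a commutative
semiring `S` is entire (has no nonzero zero-divisors) if and only if the monoid
semiring `S[G]` is entire. -/
theorem entire_iff_monoidAlgebra_entire {S G : Type*} [CommSemiring S] [AddCommMonoid G]
    (hcanc : ∀ a b c : G, a + b = a + c → b = c)
    (htf : ∀ (n : ℕ) (a b : G), 0 < n → n • a = n • b → a = b) :
    (∀ a b : S, a * b = 0 → a = 0 ∨ b = 0) ↔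
      (∀ f g : AddMonoidAlgebra S G, f * g = 0 → f = 0 ∨ g = 0) := by
  have : IsLeftCancelAdd G := ⟨fun a _ _ => hcanc a _ _⟩
  have : IsCancelAdd G := AddCommMagma.IsLeftCancelAdd.toIsCancelAdd G
  have : IsAddTorsionFree G := ⟨fun n hn a b => htf n a b (Nat.pos_of_ne_zero hn)⟩
  rw [← noZeroDivisors_iff_forall_mul_eq_zero, ← noZeroDivisors_iff_forall_mul_eq_zero,
    AddMonoidAlgebra.noZeroDivisors_iff]
end

section
/- Let S be a Noetherian commutative semiring and M an S-semimodule. Then the set Z(M) of zero-divisors of S on M is a union of subtractive prime ideals of S, each of the form Ann(m) for some nonzero m ∈ M. -/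
/-- The annihilator of an element `m` of an `S`-semimodule `M`, as an ideal of `S`. -/
def annElem (S : Type*) {M : Type*} [CommSemiring S] [AddCommMonoid M] [Module S M]
    (m : M) : Ideal S where
  carrier := {s | s • m = 0}
  zero_mem' := zero_smul S m
  add_mem' := fun {a b} ha hb => by
    have : (a + b) • m = a • m + b • m := add_smul a b m
    simp only [Set.mem_setOf_eq] at *
    rw [this, ha, hb, add_zero]
  smul_mem' := fun c s hs => by
    simp only [Set.mem_setOf_eq, smul_eq_mul] at *
    rw [mul_smul, hs, smul_zero]

lemma mem_annElem {S M : Type*} [CommSemiring S] [AddCommMonoid M] [Module S M]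
    {m : M} {s : S} : s ∈ annElem S m ↔ s • m = 0 := Iff.rfl

/-- If `S` is a Noetherian commutative semiring and `M` a nonzero `S`-semimodule,
then the set of zero-divisors of `S` on `M` is a union of subtractive prime ideals
of `S`, each of the form `Ann(m)` for some nonzero `m ∈ M`. -/
theorem zeroDivisors_eq_union_subtractive_primes
    {S M : Type*} [CommSemiring S] [AddCommMonoid M] [Module S M]
    [IsNoetherianRing S] [Nontrivial M] :
    ∃ 𝒞 : Set (Ideal S),
      (∀ q ∈ 𝒞, q.IsPrime ∧ (∀ a b : S, a + b ∈ q → a ∈ q → b ∈ q) ∧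
        ∃ m : M, m ≠ 0 ∧ q = annElem S m) ∧
      {s : S | ∃ m : M, m ≠ 0 ∧ s • m = 0} = ⋃ q ∈ 𝒞, (q : Set S) := by
  classical
  set 𝒞 : Set (Ideal S) :=
    {q | ∃ m : M, m ≠ 0 ∧ q = annElem S m ∧
      ∀ m' : M, m' ≠ 0 → q ≤ annElem S m' → q = annElem S m'} with h𝒞
  refine ⟨𝒞, ?_, ?_⟩
  · rintro q ⟨m, hm, rfl, hmax⟩
    refine ⟨?_, ?_, m, hm, rfl⟩
    · constructor
      · intro htop
        have : (1 : S) ∈ annElem S m := htop ▸ Submodule.mem_top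
        rw [mem_annElem, one_smul] at this
        exact hm this
      · intro a b hab
        rw [or_iff_not_imp_right]
        intro hb
        have hbm : b • m ≠ 0 := hb
        have hle : annElem S m ≤ annElem S (b • m) := by
          intro s hs
          rw [mem_annElem] at hs ⊢
          rw [smul_comm, hs, smul_zero]
        have heq := hmax (b • m) hbm hle
        have : a ∈ annElem S (b • m) := by
          rw [mem_annElem, smul_smul]
          exact hab
        rw [← heq] at this
        exact this
    · intro a b hab ha
      rw [mem_annElem] at *
      have h2 : a • m + b • m = 0 := by rw [← add_smul]; exact hab
      rwa [ha, zero_add] at h2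
  · ext s
    simp only [Set.mem_setOf_eq, Set.mem_iUnion, SetLike.mem_coe]
    constructor
    · rintro ⟨m, hm, hsm⟩
      have hmax := (set_has_maximal_iff_noetherian.mpr ‹IsNoetherianRing S›)
        {q : Ideal S | ∃ m' : M, m' ≠ 0 ∧ q = annElem S m' ∧ annElem S m ≤ annElem S m'}
        ⟨annElem S m, m, hm, rfl, le_rfl⟩
      obtain ⟨q, ⟨m', hm', rfl, hle⟩, hmax⟩ := hmax
      refine ⟨annElem S m', ⟨m', hm', rfl, ?_⟩, hle (mem_annElem.mpr hsm)⟩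
      intro m'' hm'' hle'
      by_contra hne
      exact hmax (annElem S m'') ⟨m'', hm'', rfl, hle.trans hle'⟩ (lt_of_le_of_ne hle' hne)
    · rintro ⟨q, ⟨m, hm, rfl, _⟩, hs⟩
      exact ⟨m, hm, hs⟩
end

section
/- Let S be a Noetherian commutative semiring and M a Noetherian S-semimodule. Then the set Ass_S(M) of associated primes of M is finite. -/
lemma mem_annElem_iff {S : Type*} {M : Type*} [CommSemiring S] [AddCommMonoid M] [Module S M]
    {m : M} {s : S} : s ∈ annElem S m ↔ s • m = 0 := Iff.rfl

/-- If `s` annihilates each element of a set `T`, it annihilates every element of the span. -/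
lemma annElem_span {S M : Type*} [CommSemiring S] [AddCommMonoid M] [Module S M]
    {s : S} {T : Set M} (h : ∀ t ∈ T, s • t = 0) {m : M}
    (hm : m ∈ Submodule.span S T) : s • m = 0 := by
  have : Submodule.span S T ≤ LinearMap.ker (s • (LinearMap.id : M →ₗ[S] M)) := by
    rw [Submodule.span_le]
    intro t ht
    simpa using h t ht
  simpa using this hm

/-- Key lemma: any infinite set of associated primes contains a prime `q`
strictly below infinitely many other members of the set. -/
lemma key_lemma {S M : Type*} [CommSemiring S] [AddCommMonoid M] [Module S M]
    [IsNoetherian S M]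
    {B : Set (Ideal S)}
    (hBA : B ⊆ {p : Ideal S | p.IsPrime ∧ ∃ m : M, p = annElem S m})
    (hB : B.Infinite) :
    ∃ q ∈ B, {p ∈ B | q < p}.Infinite := by
  classical
  obtain e := hB.natEmbedding
  set p : ℕ → Ideal S := fun j => (e j : Ideal S) with hp
  have hpinj : Function.Injective p := fun a b hab => e.injective (Subtype.ext hab)
  have hpB : ∀ j, p j ∈ B := fun j => (e j).2
  have hprime : ∀ j, (p j).IsPrime := fun j => (hBA (hpB j)).1
  choose m hm using fun j => (hBA (hpB j)).2
  -- the chain of spans stabilizes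
  set N : ℕ →o Submodule S M :=
    ⟨fun k => Submodule.span S (m '' {i | i ≤ k}), by
      intro a b hab
      exact Submodule.span_mono (Set.image_mono fun i (hi : i ≤ a) => hi.trans hab)⟩ with hN
  obtain ⟨k, hk⟩ := monotone_stabilizes_iff_noetherian.mpr ‹IsNoetherian S M› N
  have hmem : ∀ j, m j ∈ N k := by
    intro j
    rcases le_or_gt j k with h | h
    · exact Submodule.subset_span ⟨j, h, rfl⟩
    · rw [hk j h.le]
      exact Submodule.subset_span ⟨j, by simp, rfl⟩
  -- every p j contains the inf of p 0, ..., p k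
  have hinf : ∀ j, (Finset.range (k + 1)).inf p ≤ p j := by
    intro j s hs
    rw [hm j, mem_annElem_iff]
    refine annElem_span ?_ (hmem j)
    rintro t ⟨i, hi, rfl⟩
    have : s ∈ p i := (Finset.inf_le (Finset.mem_range.mpr (Nat.lt_succ_of_le hi)) :
      (Finset.range (k + 1)).inf p ≤ p i) hs
    rw [hm i] at this
    exact this
  -- so every p j contains some p i, i ≤ k
  have hex : ∀ j, ∃ i : Fin (k + 1), p (i : ℕ) ≤ p j := by
    intro j
    obtain ⟨i, hi, hle⟩ := ((hprime j).inf_le').1 (hinf j)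
    exact ⟨⟨i, Finset.mem_range.mp hi⟩, hle⟩
  choose g hg using hex
  -- pigeonhole
  obtain ⟨i₀, hi₀⟩ := Finite.exists_infinite_fiber g
  rw [Set.infinite_coe_iff] at hi₀
  refine ⟨p (i₀ : ℕ), hpB _, ?_⟩
  have : (p '' (g ⁻¹' {i₀}) \ {p (i₀ : ℕ)}) ⊆ {q ∈ B | p (i₀ : ℕ) < q} := by
    rintro q ⟨⟨j, hj, rfl⟩, hne⟩
    have hle : p (i₀ : ℕ) ≤ p j := by
      have := hg j; rw [Set.mem_preimage, Set.mem_singleton_iff] at hj; rw [hj] at this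
      exact this
    exact ⟨hpB j, lt_of_le_of_ne hle (fun h => hne h.symm)⟩
  refine Set.Infinite.mono this ?_
  exact Set.Infinite.diff (hi₀.image (Set.injOn_of_injective hpinj)) (Set.finite_singleton _)

/-- If `S` is a Noetherian commutative semiring and `M` a Noetherian `S`-semimodule,
then the set of associated primes of `M` is finite. -/
theorem ass_finite_of_noetherian
    {S M : Type*} [CommSemiring S] [AddCommMonoid M] [Module S M]
    [IsNoetherianRing S] [IsNoetherian S M] :
    {p : Ideal S | p.IsPrime ∧ ∃ m : M, p = annElem S m}.Finite := by
  classical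
  set A := {p : Ideal S | p.IsPrime ∧ ∃ m : M, p = annElem S m} with hA
  by_contra hfin
  have hAinf : A.Infinite := hfin
  -- iterate the key lemma to build a strictly increasing chain of ideals
  let T := {B : Set (Ideal S) // B ⊆ A ∧ B.Infinite}
  let next : T → T := fun B =>
    ⟨{p ∈ B.1 | (key_lemma (M := M) B.2.1 B.2.2).choose < p},
      fun p hp => B.2.1 hp.1,
      (key_lemma (M := M) B.2.1 B.2.2).choose_spec.2⟩
  let F : ℕ → T := fun n => next^[n] ⟨A, le_refl A, hAinf⟩
  have hF : ∀ n, F (n + 1) = next (F n) := fun n => Function.iterate_succ_apply' next n _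
  let q : ℕ → Ideal S := fun n => (key_lemma (M := M) (F n).2.1 (F n).2.2).choose
  have hqmem : ∀ n, q n ∈ (F n).1 := fun n =>
    (key_lemma (M := M) (F n).2.1 (F n).2.2).choose_spec.1
  have hlt : ∀ n, q n < q (n + 1) := by
    intro n
    have := hqmem (n + 1)
    rw [hF n] at this
    exact this.2
  have hmono : StrictMono q := strictMono_nat_of_lt_succ hlt
  obtain ⟨n, hn⟩ := monotone_stabilizes_iff_noetherian.mpr ‹IsNoetherianRing S›
    ⟨q, hmono.monotone⟩
  exact absurd (hn (n + 1) (Nat.le_succ n)) (hlt n).ne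
end

section
/- (Prime Avoidance for Semirings) Let S be a commutative semiring, I an ideal of S, and p_1, ..., p_n subtractive prime ideals of S. If I ⊆ p_1 ∪ ... ∪ p_n, then I ⊆ p_i for some i. -/
open Finset in
theorem prod_notMem_prime {S : Type*} [CommSemiring S] {ι : Type*} {P : Ideal S}
    (hP : P.IsPrime) (s : Finset ι) (x : ι → S) (h : ∀ j ∈ s, x j ∉ P) :
    ∏ j ∈ s, x j ∉ P := by
  classical
  induction s using Finset.induction_on with
  | empty =>
      simp only [Finset.prod_empty]
      intro h1
      exact hP.1 ((Ideal.eq_top_iff_one _).mpr h1)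
  | @insert a s2 hnm ih =>
      rw [Finset.prod_insert hnm]
      intro hmem
      rcases hP.mem_or_mem hmem with h1 | h1
      · exact h a (mem_insert_self a s2) h1
      · exact ih (fun j hj => h j (mem_insert_of_mem hj)) h1

open Finset in
theorem prime_avoidance_aux {S : Type*} [CommSemiring S] {ι : Type*} [DecidableEq ι]
    (I : Ideal S) (t : Finset ι) (p : ι → Ideal S)
    (hprime : ∀ i ∈ t, (p i).IsPrime)
    (hsub : ∀ i ∈ t, ∀ a b : S, a + b ∈ p i → a ∈ p i → b ∈ p i)
    (hI : (I : Set S) ⊆ ⋃ i ∈ t, (p i : Set S)) :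
    ∃ i ∈ t, I ≤ p i := by
  classical
  induction t using Finset.strongInductionOn with
  | _ t ih =>
  -- t is nonempty since 0 ∈ I
  have h0 : (0 : S) ∈ ⋃ i ∈ t, (p i : Set S) := hI I.zero_mem
  simp only [Set.mem_iUnion] at h0
  obtain ⟨i0, hi0, -⟩ := h0
  by_cases hex : ∃ i ∈ t, (I : Set S) ⊆ ⋃ j ∈ t.erase i, (p j : Set S)
  · obtain ⟨i, hi, hss⟩ := hex
    obtain ⟨j, hj, hle⟩ := ih (t.erase i) (erase_ssubset hi)
      (fun k hk => hprime k (mem_of_mem_erase hk))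
      (fun k hk => hsub k (mem_of_mem_erase hk)) hss
    exact ⟨j, mem_of_mem_erase hj, hle⟩
  · push_neg at hex
    by_cases hcard : t.card ≤ 1
    · refine ⟨i0, hi0, fun a ha => ?_⟩
      have := hI ha
      simp only [Set.mem_iUnion] at this
      obtain ⟨j, hj, hja⟩ := this
      have : j = i0 := by
        have ht : t = {i0} := eq_singleton_iff_unique_mem.mpr
          ⟨hi0, fun x hx => card_le_one.mp hcard x hx i0 hi0⟩
        simpa [ht] using hj
      rwa [this] at hja
    · push_neg at hcard
      -- pick witnesses
      have hch : ∀ i, ∃ a : S, i ∈ t → a ∈ I ∧ a ∉ ⋃ j ∈ t.erase i, (p j : Set S) := by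
        intro i
        by_cases hi : i ∈ t
        · obtain ⟨a, ha, hna⟩ := Set.not_subset.mp (hex i hi)
          exact ⟨a, fun _ => ⟨ha, hna⟩⟩
        · exact ⟨0, fun h => absurd h hi⟩
      choose x hx using hch
      have hxI : ∀ i ∈ t, x i ∈ I := fun i hi => (hx i hi).1
      have hxnot : ∀ i ∈ t, ∀ j ∈ t, j ≠ i → x i ∉ p j := by
        intro i hi j hj hji hmem
        exact (hx i hi).2 (Set.mem_iUnion₂.mpr ⟨j, mem_erase.mpr ⟨hji, hj⟩, hmem⟩)
      have hxp : ∀ i ∈ t, x i ∈ p i := by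
        intro i hi
        have := hI (hxI i hi)
        simp only [Set.mem_iUnion] at this
        obtain ⟨j, hj, hja⟩ := this
        rcases eq_or_ne j i with rfl | hne
        · exact hja
        · exact absurd hja (hxnot i hi j hj hne)
      set y : S := ∑ i ∈ t, ∏ j ∈ t.erase i, x j with hy
      have herase_ne : ∀ i ∈ t, (t.erase i).Nonempty := by
        intro i hi
        rw [← card_pos, card_erase_of_mem hi]
        omega
      have hyI : y ∈ I := by
        refine Ideal.sum_mem _ fun i hi => ?_
        obtain ⟨j, hj⟩ := herase_ne i hi
        rw [← Finset.mul_prod_erase _ _ hj]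
        exact I.mul_mem_right _ (hxI j (mem_of_mem_erase hj))
      have := hI hyI
      simp only [Set.mem_iUnion] at this
      obtain ⟨k, hk, hyk⟩ := this
      -- the rest of the sum is in p k
      have hrest : ∑ i ∈ t.erase k, ∏ j ∈ t.erase i, x j ∈ p k := by
        refine Ideal.sum_mem _ fun i hi => ?_
        have hki : k ∈ t.erase i :=
          mem_erase.mpr ⟨Ne.symm (mem_erase.mp hi).1, hk⟩
        rw [← Finset.mul_prod_erase _ _ hki]
        exact (p k).mul_mem_right _ (hxp k hk)
      have hsplit : (∑ i ∈ t.erase k, ∏ j ∈ t.erase i, x j) + ∏ j ∈ t.erase k, x j = y := by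
        rw [hy, Finset.sum_erase_add]
        exact hk
      have hprodk : (∏ j ∈ t.erase k, x j) ∈ p k :=
        hsub k hk _ _ (hsplit ▸ hyk) hrest
      -- but the product is not in p k since p k is prime
      have : ∃ j ∈ t.erase k, x j ∈ p k := by
        by_contra hcon
        push_neg at hcon
        exact prod_notMem_prime (hprime k hk) _ x hcon hprodk
      obtain ⟨j, hj, hjp⟩ := this
      exact absurd hjp (hxnot j (mem_of_mem_erase hj) k hk (mem_erase.mp hj).1.symm)

/-- Prime Avoidance Theorem for semirings: if an ideal `I` of a commutative
semiring `S` is contained in a finite union of subtractive prime ideals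
`p 1, ..., p n`, then `I ⊆ p i` for some `i`. -/
theorem prime_avoidance_semiring {S : Type*} [CommSemiring S]
    {n : ℕ} (I : Ideal S) (p : Fin n → Ideal S)
    (hprime : ∀ i, (p i).IsPrime)
    (hsub : ∀ i, ∀ a b : S, a + b ∈ p i → a ∈ p i → b ∈ p i)
    (hI : (I : Set S) ⊆ ⋃ i, (p i : Set S)) :
    ∃ i, I ≤ p i := by
  obtain ⟨i, -, h⟩ := prime_avoidance_aux I Finset.univ p (fun i _ => hprime i)
    (fun i _ => hsub i) (by simpa using hI)
  exact ⟨i, h⟩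
end

section
/- Let S be a commutative semiring and M an S-semimodule with Property (A). Then for every polynomial f ∈ S[X], f is M[X]-regular (not a zero-divisor on M[X]) if and only if the content ideal c(f) is M-regular (contains an element that is not a zero-divisor on M). Conversely, if this equivalence holds for all f ∈ S[X], then M has Property (A). -/
/-- The content of a polynomial `f ∈ S[X]`: the ideal of `S` generated by the
coefficients of `f`. -/
noncomputable def polyContent {S : Type*} [CommSemiring S] (f : Polynomial S) : Ideal S :=
  Ideal.span (Set.range f.coeff)

/-- The set of zero-divisors of `S` on the semimodule `M`. -/
def zdSet (S : Type*) (M : Type*) [CommSemiring S] [AddCommMonoid M] [Module S M] : Set S :=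
  {s : S | ∃ m : M, m ≠ 0 ∧ s • m = 0}

/-- An `S`-semimodule `M` has Property (A) if every finitely generated ideal of `S`
consisting of zero-divisors on `M` has a nonzero annihilator in `M`. -/
def PropertyA (S : Type*) (M : Type*) [CommSemiring S] [AddCommMonoid M] [Module S M] : Prop :=
  ∀ I : Ideal S, I.FG → (I : Set S) ⊆ zdSet S M →
    ∃ m : M, m ≠ 0 ∧ ∀ s ∈ I, s • m = 0

/-!
Both directions come down to McCoy's theorem for semimodules: `f` kills a nonzero `g ∈ M[X]` iff
some nonzero `m ∈ M` is killed by all of `c(f)`. Given such an `m`, take `g = m`. Conversely, take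
`g` with the fewest nonzero coefficients. If every coefficient of `f` kills `g`, any nonzero
coefficient of `g` will do. Otherwise let `i` be maximal with `fᵢ g ≠ 0`; comparing coefficients
of `f g = 0` in degree `i + deg g` shows that `fᵢ` kills the leading coefficient of `g`, so `fᵢ g`
is a witness with fewer nonzero coefficients. With McCoy's theorem, Property (A) for the finitely
generated ideal `c(f)` is the forward implication, and the converse follows because every finitely
generated ideal is the content of a polynomial.
-/

open Finset Polynomial

section

variable {S M : Type*} [CommSemiring S] [AddCommMonoid M] [Module S M]

theorem polyAct_apply_s9 (f : S[X]) (g : ℕ →₀ M) (j : ℕ) :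
    polyAct f g j = ∑ p ∈ antidiagonal j, f.coeff p.1 • g p.2 := by
  classical
  simp only [polyAct, Polynomial.sum, Finsupp.sum, Finset.sum_apply', Finsupp.single_apply]
  rw [← Finset.sum_product', ← Finset.sum_filter]
  refine Finset.sum_subset (fun p hp => by simpa using (Finset.mem_filter.mp hp).2) ?_
  intro p hp hnp
  simp only [Finset.mem_filter, Finset.mem_product, mem_antidiagonal.mp hp, and_true,
    not_and_or] at hnp
  rcases hnp with h | h
  · rw [Polynomial.notMem_support_iff.mp h, zero_smul]
  · rw [Finsupp.notMem_support_iff.mp h, smul_zero]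

theorem polyAct_smul_s9 (f : S[X]) (c : S) (g : ℕ →₀ M) :
    polyAct f (c • g) = c • polyAct f g := by
  ext j
  simp only [Finsupp.smul_apply, polyAct_apply_s9, Finset.smul_sum, smul_comm c]

theorem polyAct_single_zero_apply (f : S[X]) (m : M) (j : ℕ) :
    polyAct f (Finsupp.single 0 m) j = f.coeff j • m := by
  rw [polyAct_apply_s9, Finset.sum_eq_single (j, 0)]
  · rw [Finsupp.single_eq_same]
  · rintro ⟨a, b⟩ hab hne
    have hb : b ≠ 0 := by
      rintro rfl
      exact hne (by simpa using mem_antidiagonal.mp hab)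
    rw [Finsupp.single_eq_of_ne hb, smul_zero]
  · simp

theorem coeff_smul_eq_zero_of_polyAct_eq_zero {f : S[X]} {g : ℕ →₀ M} (hfg : polyAct f g = 0)
    {i e : ℕ} (hf : ∀ j, i < j → f.coeff j • g = 0) (hg : ∀ k, e < k → g k = 0) :
    f.coeff i • g e = 0 := by
  rw [← Finsupp.zero_apply (a := i + e), ← hfg, polyAct_apply_s9, Finset.sum_eq_single (i, e)]
  · rintro ⟨a, b⟩ hab hne
    rw [HasAntidiagonal.mem_antidiagonal] at hab
    rcases lt_or_ge i a with hia | hai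
    · rw [← Finsupp.smul_apply, hf a hia, Finsupp.zero_apply]
    · rw [hg b (by grind), smul_zero]
  · simp

theorem exists_ne_zero_forall_coeff_smul_eq_zero_of_polyAct_eq_zero {f : S[X]} {g : ℕ →₀ M}
    (hg : g ≠ 0) (hfg : polyAct f g = 0) : ∃ m : M, m ≠ 0 ∧ ∀ i, f.coeff i • m = 0 := by
  classical
  induction hcard : g.support.card using Nat.strong_induction_on generalizing g with
  | _ n ih =>
  obtain ⟨e, he, he_top⟩ := g.support.exists_max_image id (Finsupp.support_nonempty_iff.mpr hg)
  have hg_top : ∀ k, e < k → g k = 0 := fun k hek =>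
    Finsupp.notMem_support_iff.mp fun hk => (he_top k hk).not_gt hek
  by_cases hkill : ∀ i, f.coeff i • g = 0
  · exact ⟨g e, Finsupp.mem_support_iff.mp he, fun i => by rw [← Finsupp.smul_apply, hkill i]; rfl⟩
  push Not at hkill
  have hne : (f.support.filter fun i => f.coeff i • g ≠ 0).Nonempty := by
    obtain ⟨i, hi⟩ := hkill
    exact ⟨i, Finset.mem_filter.mpr ⟨Polynomial.mem_support_iff.mpr fun h => hi (by simp [h]), hi⟩⟩
  obtain ⟨i, hi, hi_top⟩ := exists_max_image _ id hne
  have hf_top : ∀ j, i < j → f.coeff j • g = 0 := fun j hij => by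
    by_contra hj
    refine (hi_top j (Finset.mem_filter.mpr ⟨?_, hj⟩)).not_gt hij
    exact Polynomial.mem_support_iff.mpr fun h => hj (by simp [h])
  have hlead : f.coeff i • g e = 0 := coeff_smul_eq_zero_of_polyAct_eq_zero hfg hf_top hg_top
  refine ih _ ?_ (Finset.mem_filter.mp hi).2 (by rw [polyAct_smul_s9, hfg, smul_zero]) rfl
  rw [← hcard]
  refine Finset.card_lt_card ⟨Finsupp.support_smul, fun hsub => ?_⟩
  exact Finsupp.mem_support_iff.mp (hsub he) hlead

theorem polyContent_le_iff {f : S[X]} {I : Ideal S} : polyContent f ≤ I ↔ ∀ i, f.coeff i ∈ I := by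
  rw [polyContent, Ideal.span_le, Set.range_subset_iff]
  rfl

theorem polyContent_eq_contentIdeal (f : S[X]) : polyContent f = f.contentIdeal :=
  le_antisymm (polyContent_le_iff.mpr f.coeff_mem_contentIdeal) <| Ideal.span_le.mpr fun _ hc => by
    obtain ⟨n, -, rfl⟩ := mem_coeffs_iff.mp hc
    exact polyContent_le_iff.mp le_rfl n

theorem polyContent_fg (f : S[X]) : (polyContent f).FG :=
  polyContent_eq_contentIdeal f ▸ f.contentIdeal_FG

theorem forall_mem_polyContent_smul_eq_zero_iff {f : S[X]} {m : M} :
    (∀ s ∈ polyContent f, s • m = 0) ↔ ∀ i, f.coeff i • m = 0 := by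
  simpa only [SetLike.le_def, Submodule.mem_annihilator_span_singleton] using
    (polyContent_le_iff (I := (S ∙ m).annihilator))

theorem Ideal.FG.exists_polyContent_eq {I : Ideal S} (hI : I.FG) :
    ∃ f : S[X], polyContent f = I := by
  classical
  obtain ⟨n, v, rfl⟩ := Submodule.fg_iff_exists_fin_generating_family.mp hI
  refine ⟨ofFn n v, le_antisymm (polyContent_le_iff.mpr fun i => ?_) (Ideal.span_le.mpr ?_)⟩
  · rcases lt_or_ge i n with hi | hi
    · rw [ofFn_coeff_eq_val_of_lt v hi]
      exact Ideal.subset_span ⟨_, rfl⟩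
    · rw [ofFn_coeff_eq_zero_of_ge v hi]
      exact zero_mem _
  · rintro _ ⟨j, rfl⟩
    rw [← ofFn_coeff_eq_val_of_lt v j.isLt]
    exact polyContent_le_iff.mp le_rfl j

theorem exists_polyAct_eq_zero_iff {f : S[X]} :
    (∃ g : ℕ →₀ M, g ≠ 0 ∧ polyAct f g = 0) ↔
      ∃ m : M, m ≠ 0 ∧ ∀ s ∈ polyContent f, s • m = 0 := by
  simp only [forall_mem_polyContent_smul_eq_zero_iff]
  refine ⟨fun ⟨g, hg, hfg⟩ => exists_ne_zero_forall_coeff_smul_eq_zero_of_polyAct_eq_zero hg hfg,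
    fun ⟨m, hm, hann⟩ => ⟨Finsupp.single 0 m, Finsupp.single_ne_zero.mpr hm, ?_⟩⟩
  ext j
  rw [polyAct_single_zero_apply, hann, Finsupp.zero_apply]

end

/-- `M` has Property (A) if and only if, for every `f ∈ S[X]`, `f` is
`M[X]`-regular exactly when its content ideal `c(f)` is `M`-regular. -/
theorem propertyA_iff_regular {S M : Type*} [CommSemiring S] [AddCommMonoid M] [Module S M] :
    PropertyA S M ↔
      ∀ f : Polynomial S,
        ((∀ g : ℕ →₀ M, g ≠ 0 → polyAct f g ≠ 0) ↔ ∃ s ∈ polyContent f, s ∉ zdSet S M) := by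
  refine ⟨fun hA f => ?_, fun hreg I hI hIzd => ?_⟩
  · rw [← not_iff_not]
    push Not
    rw [exists_polyAct_eq_zero_iff]
    exact ⟨fun ⟨m, hm, hann⟩ s hs => ⟨m, hm, hann s hs⟩, hA _ (polyContent_fg f)⟩
  · obtain ⟨f, rfl⟩ := hI.exists_polyContent_eq
    refine exists_polyAct_eq_zero_iff.mp ?_
    by_contra! hfreg
    obtain ⟨s, hs, hns⟩ := (hreg f).mp hfreg
    exact hns (hIzd hs)
end

section
/- Let M be an S-semimodule over a commutative semiring S. Suppose M is an Auslander semimodule (Z(S) ⊆ Z_S(M)) and has Property (A). Then M[X] is an Auslander S[X]-semimodule, i.e., Z(S[X]) ⊆ Z_{S[X]}(M[X]). -/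
/-!
By McCoy's theorem a zero-divisor `f` of `S[X]` is killed by a single nonzero constant `a`, so the
content ideal of `f` annihilates `a` and hence consists of zero-divisors of `S`. These are
zero-divisors on `M` since `M` is Auslander, and as the content ideal is finitely generated,
Property (A) yields `m ≠ 0` killed by every coefficient of `f`; then `f` kills the constant
polynomial `m`.
-/

open Polynomial

theorem Polynomial.contentIdeal_le_annihilator_of_smul_eq_zero {S : Type*} [CommSemiring S]
    {f : S[X]} {a : S} (h : a • f = 0) :
    f.contentIdeal ≤ (Submodule.span S {a}).annihilator := by
  rw [contentIdeal_def, Ideal.span_le]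
  intro s hs
  obtain ⟨n, -, rfl⟩ := mem_coeffs_iff.mp hs
  rw [SetLike.mem_coe, Submodule.mem_annihilator_span_singleton, smul_eq_mul, mul_comm,
    ← smul_eq_mul, ← coeff_smul, h, coeff_zero]

theorem polyAct_single_zero_eq_zero {S M : Type*} [CommSemiring S] [AddCommMonoid M] [Module S M]
    {f : S[X]} {m : M} (h : ∀ n, f.coeff n • m = 0) :
    polyAct f (Finsupp.single 0 m) = 0 :=
  Finset.sum_eq_zero fun n _ => by
    dsimp only
    rw [Finsupp.sum_single_index (by simp), h, Finsupp.single_zero]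

/-- If `M` is an Auslander `S`-semimodule (`Z(S) ⊆ Z_S(M)`) with Property (A), then
`M[X]` is an Auslander `S[X]`-semimodule: every zero-divisor of the semiring `S[X]`
is a zero-divisor on `M[X]`. -/
theorem auslander_polyModule {S M : Type*} [CommSemiring S] [AddCommMonoid M] [Module S M]
    (haus : zdSet S S ⊆ zdSet S M) (hA : PropertyA S M) :
    ∀ f : Polynomial S, (∃ f' : Polynomial S, f' ≠ 0 ∧ f * f' = 0) →
      ∃ g : ℕ →₀ M, g ≠ 0 ∧ polyAct f g = 0 := by
  rintro f ⟨f', hf'0, hff'⟩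
  obtain ⟨a, ha, haf⟩ : ∃ a : S, a ≠ 0 ∧ a • f = 0 :=
    notMem_nonZeroDivisors_iff.mp <|
      notMem_nonZeroDivisors_iff_right.mpr ⟨f', by rwa [mul_comm], hf'0⟩
  have hzd : (f.contentIdeal : Set S) ⊆ zdSet S M := fun s hs =>
    haus ⟨a, ha, (Submodule.mem_annihilator_span_singleton a s).mp
      (contentIdeal_le_annihilator_of_smul_eq_zero haf hs)⟩
  obtain ⟨m, hm0, hm⟩ := hA f.contentIdeal f.contentIdeal_FG hzd
  exact ⟨Finsupp.single 0 m, by simpa using hm0,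
    polyAct_single_zero_eq_zero fun n => hm _ (f.coeff_mem_contentIdeal n)⟩
end

section
/- Let S be a commutative semiring and B an S-semialgebra that is a McCoy S-semialgebra. If S is entire (no nonzero zero-divisors), then B is entire. -/
/-- The content of an element `f` of an `S`-semialgebra `B`: the intersection of
all ideals `I` of `S` such that `f ∈ IB`. -/
noncomputable def algContent (S : Type*) {B : Type*} [CommSemiring S] [CommSemiring B]
    [Algebra S B] (f : B) : Ideal S :=
  sInf {I : Ideal S | f ∈ Ideal.map (algebraMap S B) I}

/-- `B` is an Ohm–Rush `S`-semialgebra if `f ∈ c(f)B` for every `f ∈ B`. -/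
def IsOhmRush (S B : Type*) [CommSemiring S] [CommSemiring B] [Algebra S B] : Prop :=
  ∀ f : B, f ∈ Ideal.map (algebraMap S B) (algContent S f)

/-- `B` is a McCoy `S`-semialgebra if it is Ohm–Rush and whenever `g * f = 0` with
`g ≠ 0`, there is a nonzero `s ∈ S` annihilating `c(f)`. -/
def IsMcCoy (S B : Type*) [CommSemiring S] [CommSemiring B] [Algebra S B] : Prop :=
  IsOhmRush S B ∧
    ∀ f g : B, g * f = 0 → g ≠ 0 →
      ∃ s : S, s ≠ 0 ∧ ∀ x ∈ algContent S f, s * x = 0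

/-- If `B` is a McCoy `S`-semialgebra and `S` is entire, then `B` is entire. -/
theorem mcCoy_entire {S B : Type*} [CommSemiring S] [CommSemiring B] [Algebra S B]
    (hmc : IsMcCoy S B) (hS : ∀ a b : S, a * b = 0 → a = 0 ∨ b = 0) :
    ∀ f g : B, f * g = 0 → f = 0 ∨ g = 0 := by
  intro f g hfg
  by_contra h
  push_neg at h
  obtain ⟨hf, hg⟩ := h
  obtain ⟨hOR, hM⟩ := hmc
  obtain ⟨s, hs, hann⟩ := hM f g (by rw [mul_comm]; exact hfg) hg
  have hc : algContent S f = ⊥ := by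
    ext x
    simp only [Ideal.mem_bot]
    constructor
    · intro hx
      rcases hS s x (hann x hx) with h1 | h2
      · exact absurd h1 hs
      · exact h2
    · rintro rfl; exact (algContent S f).zero_mem
  have := hOR f
  rw [hc, Ideal.map_bot, Ideal.mem_bot] at this
  exact hf this
end

section
/- Let S be a nilpotent-free commutative semiring and B a weak content S-semialgebra. Then B is a McCoy S-semialgebra: whenever g·f = 0 in B with g ≠ 0, there exists a nonzero s ∈ S with s·c(f) = 0. -/
/-- `B` is a weak content `S`-semialgebra if it is Ohm–Rush and
`c(f)c(g) ⊆ √(c(fg))` for all `f, g ∈ B`. -/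
def IsWeakContent (S B : Type*) [CommSemiring S] [CommSemiring B] [Algebra S B] : Prop :=
  IsOhmRush S B ∧
    ∀ f g : B, algContent S f * algContent S g ≤ (algContent S (f * g)).radical

/-- If `S` is a nilpotent-free commutative semiring and `B` a weak content
`S`-semialgebra, then `B` is a McCoy `S`-semialgebra. -/
theorem weakContent_isMcCoy {S B : Type*} [CommSemiring S] [CommSemiring B] [Algebra S B]
    (hnil : ∀ (s : S) (n : ℕ), n ≠ 0 → s ^ n = 0 → s = 0)
    (hwc : IsWeakContent S B) :
    IsMcCoy S B := by
  obtain ⟨hor, hmul⟩ := hwc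
  refine ⟨hor, fun f g hgf hg => ?_⟩
  -- c(0) = ⊥
  have hc0 : algContent S (0 : B) = ⊥ := by
    refine le_antisymm (sInf_le ?_) bot_le
    simp [Set.mem_setOf_eq, Ideal.map_bot]
  -- c(g) ≠ ⊥
  have hcg : algContent S g ≠ ⊥ := by
    intro h
    apply hg
    have := hor g
    rw [h, Ideal.map_bot] at this
    simpa using this
  obtain ⟨s, hs, hs0⟩ := Submodule.exists_mem_ne_zero_of_ne_bot hcg
  refine ⟨s, hs0, fun x hx => ?_⟩
  have hmem : x * s ∈ (algContent S (f * g)).radical :=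
    hmul f g (Ideal.mul_mem_mul hx hs)
  rw [mul_comm f g, hgf, hc0] at hmem
  obtain ⟨n, hn⟩ := hmem
  rcases Nat.eq_zero_or_pos n with rfl | hnpos
  · simp only [pow_zero, Ideal.mem_bot] at hn
    have : (s * x : S) = s * x * 1 := by ring
    rw [this, hn, mul_zero]
  · have := hnil (x * s) n hnpos.ne' (by simpa using hn)
    rw [mul_comm] at this
    exact this
end

section
/- Let S be a commutative semiring, p_1, ..., p_n subtractive prime ideals of S, and B a McCoy S-semialgebra. If Z(S) ⊆ p_1 ∪ ... ∪ p_n, then Z(B) ⊆ (p_1 B) ∪ ... ∪ (p_n B). -/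
/-- Prime avoidance for commutative semirings with subtractive prime ideals. -/
theorem semiring_prime_avoidance {S : Type*} [CommSemiring S] {n : ℕ} (p : Fin n → Ideal S)
    (hprime : ∀ i, (p i).IsPrime)
    (hsub : ∀ i, ∀ a b : S, a + b ∈ p i → a ∈ p i → b ∈ p i)
    (t : Finset (Fin n)) (I : Ideal S)
    (hI : (I : Set S) ⊆ ⋃ i ∈ t, (p i : Set S)) : ∃ i ∈ t, I ≤ p i := by
  classical
  induction t using Finset.strongInduction with
  | _ t ih =>
    by_cases hred : ∃ i ∈ t, (I : Set S) ⊆ ⋃ j ∈ t.erase i, (p j : Set S)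
    · obtain ⟨i, hi, hsubset⟩ := hred
      obtain ⟨j, hj, hIj⟩ := ih (t.erase i) (Finset.erase_ssubset hi) hsubset
      exact ⟨j, Finset.mem_of_mem_erase hj, hIj⟩
    push_neg at hred
    -- t is nonempty (since 0 ∈ I is in the union)
    have h0 : (0 : S) ∈ ⋃ i ∈ t, (p i : Set S) := hI I.zero_mem
    obtain ⟨i0, hi0t, -⟩ := Set.mem_iUnion₂.1 h0
    -- for each i ∈ t, pick xᵢ ∈ I ∩ pᵢ avoiding all other pⱼ (j ∈ t)
    have hx : ∀ i ∈ t, ∃ x, x ∈ I ∧ x ∈ p i ∧ ∀ j ∈ t, j ≠ i → x ∉ p j := by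
      intro i hi
      obtain ⟨x, hxI, hxn⟩ := Set.not_subset.1 (hred i hi)
      have hxu := hI hxI
      simp only [Set.mem_iUnion, SetLike.mem_coe, exists_prop] at hxu hxn
      push_neg at hxn
      obtain ⟨k, hkt, hxk⟩ := hxu
      have hki : k = i := by
        by_contra hne
        exact (hxn k (Finset.mem_erase.2 ⟨hne, hkt⟩)) hxk
      exact ⟨x, hxI, hki ▸ hxk, fun j hjt hji => hxn j (Finset.mem_erase.2 ⟨hji, hjt⟩)⟩
    choose! x hxI hxp hxn using hx
    by_cases hsing : t.erase i0 = ∅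
    · -- t = {i0}, so I ⊆ p i0
      refine ⟨i0, hi0t, fun a ha => ?_⟩
      have := hI ha
      simp only [Set.mem_iUnion, SetLike.mem_coe, exists_prop] at this
      obtain ⟨k, hkt, hk⟩ := this
      have : k = i0 := by
        by_contra hne
        exact absurd (Finset.mem_erase.2 ⟨hne, hkt⟩) (by simp [hsing])
      exact this ▸ hk
    · -- n ≥ 2 case: derive a contradiction
      exfalso
      set q : S := ∏ j ∈ t.erase i0, x j with hq
      obtain ⟨j0, hj0⟩ := Finset.nonempty_iff_ne_empty.2 hsing
      have hqI : q ∈ I := by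
        rw [hq, ← Finset.prod_erase_mul _ _ hj0]
        exact I.mul_mem_left _ (hxI j0 (Finset.mem_of_mem_erase hj0))
      have hyI : x i0 + q ∈ I := I.add_mem (hxI i0 hi0t) hqI
      have hyu := hI hyI
      simp only [Set.mem_iUnion, SetLike.mem_coe, exists_prop] at hyu
      obtain ⟨k, hkt, hyk⟩ := hyu
      by_cases hki : k = i0
      · subst hki
        have hqk : q ∈ p k := hsub k _ _ hyk (hxp k hkt)
        have := (Ideal.IsPrime.prod_mem_iff (hp := hprime k)).1 hqk
        obtain ⟨j, hjt, hjk⟩ := this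
        exact hxn j (Finset.mem_of_mem_erase hjt) k hkt (Ne.symm (Finset.ne_of_mem_erase hjt)) hjk
      · have hqk : q ∈ p k := by
          refine (Ideal.IsPrime.prod_mem_iff (hp := hprime k)).2 ⟨k, ?_, hxp k hkt⟩
          exact Finset.mem_erase.2 ⟨hki, hkt⟩
        have : x i0 ∈ p k := hsub k q (x i0) (by rwa [add_comm] at hyk) hqk
        exact hxn i0 hi0t k hkt hki this

/-- If `B` is a McCoy `S`-semialgebra, the `pᵢ` are subtractive prime ideals of `S`
and `Z(S) ⊆ p₁ ∪ ... ∪ pₙ`, then `Z(B) ⊆ p₁B ∪ ... ∪ pₙB`. -/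
theorem mcCoy_zeroDivisors_subset {S B : Type*} [CommSemiring S] [CommSemiring B] [Algebra S B]
    (hmc : IsMcCoy S B) {n : ℕ} (p : Fin n → Ideal S)
    (hprime : ∀ i, (p i).IsPrime)
    (hsub : ∀ i, ∀ a b : S, a + b ∈ p i → a ∈ p i → b ∈ p i)
    (hZ : {s : S | ∃ t : S, t ≠ 0 ∧ s * t = 0} ⊆ ⋃ i, (p i : Set S)) :
    {f : B | ∃ g : B, g ≠ 0 ∧ f * g = 0} ⊆
      ⋃ i, (Ideal.map (algebraMap S B) (p i) : Set B) := by
  rintro f ⟨g, hg0, hfg⟩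
  obtain ⟨hOR, hMc⟩ := hmc
  obtain ⟨s, hs0, hann⟩ := hMc f g (by rwa [mul_comm]) hg0
  -- every element of c(f) is a zero divisor of S
  have hc : (algContent S f : Set S) ⊆ ⋃ i ∈ (Finset.univ : Finset (Fin n)), (p i : Set S) := by
    intro a ha
    have : a ∈ ⋃ i, (p i : Set S) := hZ ⟨s, hs0, by rw [mul_comm]; exact hann a ha⟩
    simpa using this
  obtain ⟨i, -, hci⟩ := semiring_prime_avoidance p hprime hsub Finset.univ (algContent S f) hc
  refine Set.mem_iUnion.2 ⟨i, ?_⟩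
  exact Ideal.map_mono hci (hOR f)
end

section
/- Let B be an Ohm-Rush S-semialgebra with homogeneous content function (c(s·f) = s·c(f) for all s ∈ S, f ∈ B) whose structure map λ : S → B is injective. Then for any s ∈ S, Ann_S(s)·B = Ann_B(λ(s)), i.e., f ∈ B annihilates λ(s) if and only if c(f) ⊆ Ann_S(s). -/
/-- The annihilator of an element `z` of a commutative semiring `T`, as an ideal. -/
def annIdeal (T : Type*) [CommSemiring T] (z : T) : Ideal T where
  carrier := {t | t * z = 0}
  zero_mem' := zero_mul z
  add_mem' := fun {a b} ha hb => by
    simp only [Set.mem_setOf_eq] at *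
    rw [add_mul, ha, hb, add_zero]
  smul_mem' := fun c t ht => by
    simp only [Set.mem_setOf_eq, smul_eq_mul] at *
    rw [mul_assoc, ht, mul_zero]

open Pointwise in
/-- If `B` is an Ohm–Rush `S`-semialgebra with homogeneous content function and
injective structure map, then `Ann_S(s)·B = Ann_B(λ(s))` for every `s ∈ S`;
that is, `f ∈ B` annihilates `λ(s)` if and only if `c(f) ⊆ Ann_S(s)`. -/
theorem ohmRush_ann_map {S B : Type*} [CommSemiring S] [CommSemiring B] [Algebra S B]
    (hor : IsOhmRush S B)
    (hhom : ∀ (s : S) (f : B), algContent S (algebraMap S B s * f) = s • algContent S f)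
    (hinj : Function.Injective (algebraMap S B)) (s : S) :
    Ideal.map (algebraMap S B) (annIdeal S s) = annIdeal B (algebraMap S B s) ∧
      ∀ f : B, f * algebraMap S B s = 0 ↔ algContent S f ≤ annIdeal S s := by
  have hzero : algContent S (0 : B) = ⊥ := by
    refine le_antisymm (sInf_le ?_) bot_le
    show (0 : B) ∈ Ideal.map (algebraMap S B) (⊥ : Ideal S)
    exact zero_mem _
  have hfwd : ∀ f : B, f * algebraMap S B s = 0 → algContent S f ≤ annIdeal S s := by
    intro f hf x hx
    have h0 : algContent S (algebraMap S B s * f) = s • algContent S f := hhom s f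
    rw [mul_comm, hf, hzero] at h0
    have : s • x ∈ s • algContent S f := Submodule.smul_mem_pointwise_smul x s _ hx
    rw [← h0] at this
    show x * s = 0
    rw [mul_comm]
    simpa [smul_eq_mul] using (Submodule.mem_bot S).mp this
  have hmap : Ideal.map (algebraMap S B) (annIdeal S s) ≤ annIdeal B (algebraMap S B s) := by
    rw [Ideal.map_le_iff_le_comap]
    intro t ht
    show algebraMap S B t * algebraMap S B s = 0
    rw [← map_mul, show t * s = 0 from ht, map_zero]
  have hbwd : ∀ f : B, algContent S f ≤ annIdeal S s → f * algebraMap S B s = 0 := by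
    intro f hle
    have : f ∈ Ideal.map (algebraMap S B) (annIdeal S s) :=
      Ideal.map_mono hle (hor f)
    exact hmap this
  constructor
  · refine le_antisymm hmap ?_
    intro f hf
    exact Ideal.map_mono (hfwd f hf) (hor f)
  · exact fun f => ⟨hfwd f, hbwd f⟩
end

section
/- Let B be a weak content S-semialgebra with injective structure map λ and homogeneous content function, and let p be a strong Krull prime of S. Then either pB = B, or pB is a strong Krull prime of the semiring B. -/
/-- A prime ideal `p` of a commutative semiring `T` is a strong Krull prime if for
every finitely generated ideal `I ⊆ p` there is `z ∈ T` with `I ⊆ Ann(z) ⊆ p`. -/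
def IsStrongKrullPrime {T : Type*} [CommSemiring T] (p : Ideal T) : Prop :=
  p.IsPrime ∧ ∀ I : Ideal T, I.FG → I ≤ p →
    ∃ z : T, I ≤ annIdeal T z ∧ annIdeal T z ≤ p

lemma exists_fg_of_mem_map' {S B : Type*} [CommSemiring S] [CommSemiring B] [Algebra S B]
    {I : Ideal S} {f : B} (hf : f ∈ Ideal.map (algebraMap S B) I) :
    ∃ I₀ : Ideal S, I₀.FG ∧ I₀ ≤ I ∧ f ∈ Ideal.map (algebraMap S B) I₀ := by
  rw [Ideal.map] at hf
  refine Submodule.span_induction ?_ ?_ ?_ ?_ hf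
  · rintro x ⟨a, ha, rfl⟩
    exact ⟨Ideal.span {a}, Submodule.fg_span_singleton a, (Ideal.span_le).2 (by simpa using ha),
      Ideal.mem_map_of_mem _ (Ideal.subset_span rfl)⟩
  · exact ⟨⊥, ⟨∅, by simp⟩, bot_le, by simp⟩
  · rintro x y _ _ ⟨I₁, h1, l1, m1⟩ ⟨I₂, h2, l2, m2⟩
    exact ⟨I₁ ⊔ I₂, Submodule.FG.sup h1 h2, sup_le l1 l2,
      Ideal.add_mem _ (Ideal.map_mono le_sup_left m1) (Ideal.map_mono le_sup_right m2)⟩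
  · rintro b x _ ⟨I₁, h1, l1, m1⟩
    exact ⟨I₁, h1, l1, Submodule.smul_mem _ b m1⟩

lemma algContent_zero' (S B : Type*) [CommSemiring S] [CommSemiring B] [Algebra S B] :
    algContent S (0 : B) = ⊥ :=
  le_bot_iff.1 (sInf_le (show (0 : B) ∈ Ideal.map (algebraMap S B) ⊥ by
    simp [Ideal.map_bot]))

open Pointwise in
/-- If `B` is a weak content `S`-semialgebra with injective structure map and
homogeneous content function, and `p` is a strong Krull prime of `S`, then either
`pB = B` or `pB` is a strong Krull prime of `B`. -/
theorem strongKrullPrime_map {S B : Type*} [CommSemiring S] [CommSemiring B] [Algebra S B]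
    (hwc : IsWeakContent S B)
    (hinj : Function.Injective (algebraMap S B))
    (hhom : ∀ (s : S) (f : B), algContent S (algebraMap S B s * f) = s • algContent S f)
    (p : Ideal S) (hp : IsStrongKrullPrime p) :
    Ideal.map (algebraMap S B) p = ⊤ ∨
      IsStrongKrullPrime (Ideal.map (algebraMap S B) p) := by
  by_cases htop : Ideal.map (algebraMap S B) p = ⊤
  · exact Or.inl htop
  right
  have hOR := hwc.1
  have memc : ∀ (f : B) (I : Ideal S),
      f ∈ Ideal.map (algebraMap S B) I ↔ algContent S f ≤ I := by
    intro f I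
    constructor
    · intro hf
      exact sInf_le hf
    · intro h
      exact Ideal.map_mono h (hOR f)
  have hprime : (Ideal.map (algebraMap S B) p).IsPrime := by
    constructor
    · exact htop
    · intro f g hfg
      have h1 : algContent S (f * g) ≤ p := (memc _ _).1 hfg
      have h2 : algContent S f * algContent S g ≤ p := by
        refine le_trans (hwc.2 f g) ?_
        calc (algContent S (f * g)).radical ≤ p.radical := Ideal.radical_mono h1
          _ = p := hp.1.radical
      rcases (Ideal.IsPrime.mul_le hp.1).1 h2 with h | h
      · exact Or.inl ((memc f p).2 h)
      · exact Or.inr ((memc g p).2 h)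
  refine ⟨hprime, ?_⟩
  intro J hJ hJp
  obtain ⟨T, rfl⟩ := hJ
  have hgen : ∀ f ∈ T, ∃ I₀ : Ideal S, I₀.FG ∧ I₀ ≤ p ∧
      f ∈ Ideal.map (algebraMap S B) I₀ := by
    intro f hf
    exact exists_fg_of_mem_map' (hJp (Ideal.subset_span hf))
  choose! Ifun hFG hle hmem using hgen
  obtain ⟨z, hz1, hz2⟩ := hp.2 (T.sup Ifun)
    (Submodule.fg_finset_sup _ _ fun f hf => hFG f hf)
    (Finset.sup_le fun f hf => hle f hf)
  refine ⟨algebraMap S B z, ?_, ?_⟩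
  · rw [Ideal.span_le]
    intro f hf
    have h1 : f ∈ Ideal.map (algebraMap S B) (annIdeal S z) :=
      Ideal.map_mono (le_trans ((Finset.le_sup hf).trans hz1) le_rfl) (hmem f hf)
    have h2 : Ideal.map (algebraMap S B) (annIdeal S z) ≤
        annIdeal B (algebraMap S B z) := by
      rw [Ideal.map_le_iff_le_comap]
      intro a ha
      show algebraMap S B a * algebraMap S B z = 0
      rw [← map_mul]
      have : a * z = 0 := ha
      rw [this, map_zero]
    exact h2 h1
  · intro g hg
    have hzg : algebraMap S B z * g = 0 := by
      rw [mul_comm]; exact hg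
    have hc : z • algContent S g = ⊥ := by
      rw [← hhom z g, hzg, algContent_zero']
    have hcg : algContent S g ≤ p := by
      intro x hx
      have : z • x ∈ z • algContent S g := Submodule.smul_mem_pointwise_smul x z _ hx
      rw [hc] at this
      have hzx : z * x = 0 := this
      exact hz2 (show x * z = 0 by rw [mul_comm]; exact hzx)
    exact (memc g p).2 hcg
end
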